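/- Under the primal error setting with coercivity constant α_A, one has ∑_{n=1}^{N} (eⁿ)ᵀ M eⁿ ≤ (T/α_A)·∑_{n=1}^{N} ‖rⁿ‖₋₁², where T = N·Δt. -/

import Mathlib

open Matrix BigOperators Finset

/-- The energy norm `‖v‖_{G*} = √(vᵀ G* v)` induced by a matrix `G`. -/
noncomputable def normG {d : ℕ} (G : Matrix (Fin d) (Fin d) ℝ) (v : Fin d → ℝ) : ℝ :=
  Real.sqrt (v ⬝ᵥ G.mulVec v)

/-- The dual norm `‖r‖₋₁ = sup_{v ≠ 0} (rᵀ v)/‖v‖_{G*}`. -/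
noncomputable def dualNorm {d : ℕ} (G : Matrix (Fin d) (Fin d) ℝ) (r : Fin d → ℝ) : ℝ :=
  ⨆ v : {v : Fin d → ℝ // v ≠ 0}, (r ⬝ᵥ (v : Fin d → ℝ)) / normG G (v : Fin d → ℝ)

/-- The symmetric part `(A + Aᵀ)/2` of a matrix. -/
noncomputable def symPart {d : ℕ} (A : Matrix (Fin d) (Fin d) ℝ) : Matrix (Fin d) (Fin d) ℝ :=
  ((1 : ℝ)/2) • (A + Aᵀ)

/-! Testing the implicit Euler step `(M + Δt A) eⁿ = M eⁿ⁻¹ - Δt rⁿ` with `eⁿ` and using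
`2 (eⁿ)ᵀ M eⁿ⁻¹ ≤ Eⁿ + Eⁿ⁻¹` (where `Eⁿ = (eⁿ)ᵀ M eⁿ`), coercivity of `A` and Young's inequality
`‖rⁿ‖₋₁ ‖eⁿ‖_{G*} ≤ α_A ‖eⁿ‖²_{G*} + ‖rⁿ‖₋₁² / (4 α_A)` gives `Eⁿ ≤ Eⁿ⁻¹ + Δt/(2α_A) ‖rⁿ‖₋₁²`.
Since `E⁰ = 0`, every `Eⁿ` is at most `Δt/(2α_A) ∑ₖ ‖rᵏ‖₋₁²`; summing over the `N` steps gives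
the claim, even with an extra factor `1/2`. -/

namespace Matrix

variable {n : Type*} [Fintype n]

lemma PosSemidef.dotProduct_mulVec_comm {M : Matrix n n ℝ} (hM : M.PosSemidef) (x y : n → ℝ) :
    x ⬝ᵥ M *ᵥ y = y ⬝ᵥ M *ᵥ x := by
  have hMT : Mᵀ = M := by
    simpa only [conjTranspose_eq_transpose_of_trivial] using hM.isHermitian.eq
  rw [← dotProduct_transpose_mulVec, hMT]

lemma PosSemidef.dotProduct_mulVec_sq_le {M : Matrix n n ℝ} (hM : M.PosSemidef) (x y : n → ℝ) :
    (x ⬝ᵥ M *ᵥ y) ^ 2 ≤ (x ⬝ᵥ M *ᵥ x) * (y ⬝ᵥ M *ᵥ y) := by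
  let _ := M.toSeminormedAddCommGroup hM
  let _ := M.toInnerProductSpace hM
  -- the inner product induced by `M` is `⟪x, y⟫ = (M *ᵥ y) ⬝ᵥ x`
  have h := real_inner_mul_inner_self_le x y
  change (M *ᵥ y ⬝ᵥ x) * (M *ᵥ y ⬝ᵥ x) ≤ (M *ᵥ x ⬝ᵥ x) * (M *ᵥ y ⬝ᵥ y) at h
  rw [sq]
  simpa only [dotProduct_comm _ x, dotProduct_comm _ y] using h

lemma PosSemidef.two_mul_dotProduct_mulVec_le {M : Matrix n n ℝ} (hM : M.PosSemidef)
    (x y : n → ℝ) : 2 * (x ⬝ᵥ M *ᵥ y) ≤ x ⬝ᵥ M *ᵥ x + y ⬝ᵥ M *ᵥ y := by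
  have h := hM.dotProduct_mulVec_nonneg (x - y)
  simp only [star_trivial, mulVec_sub, dotProduct_sub, sub_dotProduct,
    hM.dotProduct_mulVec_comm y x] at h
  linarith

end Matrix

section EnergyNorm

variable {d : ℕ} {G : Matrix (Fin d) (Fin d) ℝ}

lemma normG_neg (v : Fin d → ℝ) : normG G (-v) = normG G v := by
  simp only [normG, mulVec_neg, dotProduct_neg, neg_dotProduct, neg_neg]

lemma normG_pos (hG : G.PosDef) {v : Fin d → ℝ} (hv : v ≠ 0) : 0 < normG G v :=
  Real.sqrt_pos.mpr (by simpa using hG.dotProduct_mulVec_pos hv)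

lemma dotProduct_mulVec_le_normG_mul_normG (hG : G.PosSemidef) (x y : Fin d → ℝ) :
    x ⬝ᵥ G *ᵥ y ≤ normG G x * normG G y := by
  rw [normG, normG, ← Real.sqrt_mul (by simpa using hG.dotProduct_mulVec_nonneg x)]
  exact Real.le_sqrt_of_sq_le (hG.dotProduct_mulVec_sq_le x y)

lemma dotProduct_le_normG_inv_mul_normG (hG : G.PosDef) (r v : Fin d → ℝ) :
    r ⬝ᵥ v ≤ normG G (G⁻¹ *ᵥ r) * normG G v := by
  have hGG : G *ᵥ (G⁻¹ *ᵥ r) = r := by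
    rw [mulVec_mulVec, mul_nonsing_inv G ((isUnit_iff_isUnit_det G).mp hG.isUnit), one_mulVec]
  calc r ⬝ᵥ v = v ⬝ᵥ G *ᵥ (G⁻¹ *ᵥ r) := by rw [hGG, dotProduct_comm]
    _ = G⁻¹ *ᵥ r ⬝ᵥ G *ᵥ v := hG.posSemidef.dotProduct_mulVec_comm _ _
    _ ≤ _ := dotProduct_mulVec_le_normG_mul_normG hG.posSemidef _ _

lemma dotProduct_le_dualNorm_mul_normG (hG : G.PosDef) (r v : Fin d → ℝ) :
    r ⬝ᵥ v ≤ dualNorm G r * normG G v := by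
  rcases eq_or_ne v 0 with rfl | hv
  · simp [normG]
  have hbdd : BddAbove (Set.range fun w : {w : Fin d → ℝ // w ≠ 0} =>
      (r ⬝ᵥ (w : Fin d → ℝ)) / normG G w) := by
    refine ⟨normG G (G⁻¹ *ᵥ r), ?_⟩
    rintro _ ⟨⟨w, hw⟩, rfl⟩
    exact (div_le_iff₀ (normG_pos hG hw)).mpr (dotProduct_le_normG_inv_mul_normG hG r w)
  exact (div_le_iff₀ (normG_pos hG hv)).mp (le_ciSup hbdd ⟨v, hv⟩)

end EnergyNorm

lemma dotProduct_symPart_mulVec {d : ℕ} (A : Matrix (Fin d) (Fin d) ℝ) (v : Fin d → ℝ) :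
    v ⬝ᵥ symPart A *ᵥ v = v ⬝ᵥ A *ᵥ v := by
  rw [symPart, smul_mulVec, add_mulVec, dotProduct_smul, dotProduct_add,
    dotProduct_transpose_mulVec, smul_eq_mul]
  ring

lemma young_mul_le {a x y : ℝ} (ha : 0 < a) : x * y ≤ a * y ^ 2 + x ^ 2 / (4 * a) := by
  have h : a * y ^ 2 + x ^ 2 / (4 * a) - x * y = (2 * a * y - x) ^ 2 / (4 * a) := by
    field_simp; ring
  rw [← sub_nonneg, h]
  positivity

lemma implicitEuler_energy_step {d : ℕ} {G M A : Matrix (Fin d) (Fin d) ℝ}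
    (hG : G.PosDef) (hM : M.PosSemidef) {Δt α : ℝ} (hΔt : 0 < Δt) (hα : 0 < α)
    {e e' r : Fin d → ℝ} (hcoer : α * normG G e ^ 2 ≤ e ⬝ᵥ A *ᵥ e)
    (hstep : (M + Δt • A) *ᵥ e = M *ᵥ e' - Δt • r) :
    e ⬝ᵥ M *ᵥ e ≤ e' ⬝ᵥ M *ᵥ e' + Δt / (2 * α) * dualNorm G r ^ 2 := by
  have htested : e ⬝ᵥ M *ᵥ e + Δt * (e ⬝ᵥ A *ᵥ e) = e ⬝ᵥ M *ᵥ e' - Δt * (r ⬝ᵥ e) := by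
    simpa only [add_mulVec, smul_mulVec, dotProduct_add, dotProduct_sub, dotProduct_smul,
      smul_eq_mul, dotProduct_comm e r] using congrArg (e ⬝ᵥ ·) hstep
  have hcross := hM.two_mul_dotProduct_mulVec_le e e'
  have hdual : -(r ⬝ᵥ e) ≤ dualNorm G r * normG G e := by
    simpa only [dotProduct_neg, normG_neg] using dotProduct_le_dualNorm_mul_normG hG r (-e)
  have hyoung := young_mul_le (x := dualNorm G r) (y := normG G e) hα
  have hq : Δt / (2 * α) * dualNorm G r ^ 2 = 2 * Δt * (dualNorm G r ^ 2 / (4 * α)) := by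
    field_simp; ring
  rw [hq]
  linarith [mul_le_mul_of_nonneg_left hcoer hΔt.le, mul_le_mul_of_nonneg_left hdual hΔt.le,
    mul_le_mul_of_nonneg_left hyoung hΔt.le]

lemma le_sum_Icc_of_le_add {E s : ℕ → ℝ} {N : ℕ} (h0 : E 0 ≤ 0)
    (hstep : ∀ n, 1 ≤ n → n ≤ N → E n ≤ E (n - 1) + s n) :
    ∀ n ≤ N, E n ≤ ∑ k ∈ Icc 1 n, s k := by
  intro n
  induction n with
  | zero => simpa using h0
  | succ m ih =>
    intro hm
    rw [sum_Icc_succ_top (Nat.le_add_left 1 m)]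
    have hlast := hstep (m + 1) (Nat.le_add_left 1 m) hm
    rw [Nat.add_sub_cancel] at hlast
    linarith [ih (Nat.le_of_succ_le hm)]

lemma sum_Icc_le_mul_sum_of_le_add {E s : ℕ → ℝ} {N : ℕ} (h0 : E 0 ≤ 0) (hs : ∀ n, 0 ≤ s n)
    (hstep : ∀ n, 1 ≤ n → n ≤ N → E n ≤ E (n - 1) + s n) :
    ∑ n ∈ Icc 1 N, E n ≤ N * ∑ n ∈ Icc 1 N, s n := by
  calc ∑ n ∈ Icc 1 N, E n ≤ ∑ _n ∈ Icc 1 N, ∑ k ∈ Icc 1 N, s k := by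
        refine sum_le_sum fun n hn => ?_
        have hnN := (mem_Icc.mp hn).2
        exact (le_sum_Icc_of_le_add h0 hstep n hnN).trans
          (sum_le_sum_of_subset_of_nonneg (Icc_subset_Icc_right hnN) fun k _ _ => hs k)
    _ = N * ∑ n ∈ Icc 1 N, s n := by simp

theorem stmt4_general {d : ℕ}
    (G M A : Matrix (Fin d) (Fin d) ℝ) (hG : G.PosDef) (hM : M.PosSemidef)
    (Δt : ℝ) (hΔt : 0 < Δt) (N : ℕ)
    (αA : ℝ) (hαA : 0 < αA)
    (hcoA : ∀ v : Fin d → ℝ, αA * (normG G v)^2 ≤ v ⬝ᵥ (symPart A).mulVec v)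
    (e r : ℕ → Fin d → ℝ) (he0 : e 0 = 0)
    (hstep : ∀ k, 1 ≤ k → k ≤ N →
      (M + Δt • A).mulVec (e k) = M.mulVec (e (k - 1)) - Δt • r k) :
    ∑ n ∈ Finset.Icc 1 N, e n ⬝ᵥ M.mulVec (e n) ≤
      ((N * Δt) / αA) * ∑ n ∈ Finset.Icc 1 N, (dualNorm G (r n))^2 := by
  have henergy : ∀ n, 1 ≤ n → n ≤ N → e n ⬝ᵥ M *ᵥ e n ≤
      e (n - 1) ⬝ᵥ M *ᵥ e (n - 1) + Δt / (2 * αA) * dualNorm G (r n) ^ 2 := fun n h1 h2 =>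
    implicitEuler_energy_step hG hM hΔt hαA
      ((hcoA (e n)).trans_eq (dotProduct_symPart_mulVec A (e n))) (hstep n h1 h2)
  calc ∑ n ∈ Icc 1 N, e n ⬝ᵥ M *ᵥ e n
      ≤ N * ∑ n ∈ Icc 1 N, Δt / (2 * αA) * dualNorm G (r n) ^ 2 :=
        sum_Icc_le_mul_sum_of_le_add (by simp [he0]) (fun n => by positivity) henergy
    _ = N * Δt / (2 * αA) * ∑ n ∈ Icc 1 N, dualNorm G (r n) ^ 2 := by
        rw [← mul_sum]; ring
    _ ≤ N * Δt / αA * ∑ n ∈ Icc 1 N, dualNorm G (r n) ^ 2 := by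
        gcongr
        linarith

theorem stmt4 {d : ℕ} (hd : 1 ≤ d)
    (G M A : Matrix (Fin d) (Fin d) ℝ) (hG : G.PosDef) (hM : M.PosSemidef)
    (Δt : ℝ) (hΔt : 0 < Δt) (N : ℕ) (hN : 1 ≤ N)
    (αA : ℝ) (hαA : 0 < αA)
    (hcoA : ∀ v : Fin d → ℝ, αA * (normG G v)^2 ≤ v ⬝ᵥ (symPart A).mulVec v)
    (e r : ℕ → Fin d → ℝ) (he0 : e 0 = 0)
    (hstep : ∀ k, 1 ≤ k → k ≤ N →
      (M + Δt • A).mulVec (e k) = M.mulVec (e (k - 1)) - Δt • r k) :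
    ∑ n ∈ Finset.Icc 1 N, e n ⬝ᵥ M.mulVec (e n) ≤
      ((N * Δt) / αA) * ∑ n ∈ Finset.Icc 1 N, (dualNorm G (r n))^2 :=
  stmt4_general G M A hG hM Δt hΔt N αA hαA hcoA e r he0 hstep
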